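/- arXiv:1005.0128 — 2 statements merged into one kernel-verified Lean document; each statement's English description precedes it below -/
import Mathlib

section
/- Let s̲ be a rational subspace of dimension k. Then d_{X∩s̲}^{-1} · J_{X∩s̲} ⊆ R_{X,k-1}, where J_{X∩s̲} is the ideal of S[g*] generated by the elements d_Z for Z a cocircuit of the list X∩s̲ inside s̲. Equivalently, d_{X∩s̲}^{-1} S[g*] ∩ L_{k-1} ⊇ d_{X∩s̲}^{-1} J_{X∩s̲} where L = d_X^{-1} S[g*] and L_{k-1} = L ∩ R_{X,k-1}. -/
/-!
STATEMENT 3: Let s̲ be a rational subspace of dimension k ≥ 1.  Then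
d_{X∩s̲}^{-1} · J_{X∩s̲} ⊆ R_{X,k-1}, where J_{X∩s̲} is the ideal of S[g*]
generated by the elements d_Z for Z a cocircuit of the list X∩s̲ inside s̲.
(Equivalently d_{X∩s̲}^{-1} S[g*] ∩ L_{k-1} ⊇ d_{X∩s̲}^{-1} J_{X∩s̲}.)
-/

noncomputable section

open scoped BigOperators

abbrev Sring (n : ℕ) := MvPolynomial (Fin n) ℝ

def linP {n : ℕ} (a : Fin n → ℝ) : Sring n :=
  ∑ i, MvPolynomial.C (a i) * MvPolynomial.X i

def RationalSub {n m : ℕ} (X : Fin m → Fin n → ℝ)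
    (W : Submodule ℝ (Fin n → ℝ)) : Prop :=
  W = Submodule.span ℝ (Set.range X ∩ ↑W)

def toFF {n : ℕ} (p : Sring n) : FractionRing (Sring n) :=
  algebraMap (Sring n) (FractionRing (Sring n)) p

/-- The polar-order filtration step R_{X,j}. -/
def Rfil {n m : ℕ} (X : Fin m → Fin n → ℝ) (j : ℕ) :
    Submodule ℝ (FractionRing (Sring n)) :=
  Submodule.span ℝ
    {x | ∃ (p : Sring n) (e : Fin m → ℕ) (W : Submodule ℝ (Fin n → ℝ)),
      RationalSub X W ∧ Module.finrank ℝ W ≤ j ∧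
      (∀ i, 0 < e i → X i ∈ W) ∧
      x = toFF p / toFF (∏ i, linP (X i) ^ e i)}

open Classical in
/-- J_{X∩s̲} ⊆ S[g*]: the ideal generated by the products d_Z for Z a
cocircuit of the sublist X∩s̲ inside s̲, i.e. Z = (X∩s̲)∖H for H a rational
hyperplane of s̲. -/
def Jsub {n m : ℕ} (X : Fin m → Fin n → ℝ) (s : Submodule ℝ (Fin n → ℝ)) :
    Ideal (Sring n) :=
  Ideal.span {q | ∃ H : Submodule ℝ (Fin n → ℝ), RationalSub X H ∧ H ≤ s ∧
    Module.finrank ℝ H + 1 = Module.finrank ℝ s ∧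
    q = ∏ i ∈ Finset.univ.filter (fun i => X i ∈ s ∧ X i ∉ H), linP (X i)}

lemma linP_ne_zero {n : ℕ} {a : Fin n → ℝ} (ha : a ≠ 0) : linP a ≠ 0 := by
  intro h
  have h2 : MvPolynomial.eval a (linP a) = 0 := by rw [h]; simp
  rw [linP] at h2
  simp only [map_sum, map_mul, MvPolynomial.eval_C, MvPolynomial.eval_X] at h2
  have := (Finset.sum_eq_zero_iff_of_nonneg
    (fun i _ => mul_self_nonneg (a i))).mp h2
  exact ha (funext fun i => mul_self_eq_zero.mp (this i (Finset.mem_univ i)))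

lemma Rfil_mul {n m : ℕ} (X : Fin m → Fin n → ℝ) (j : ℕ) (r : Sring n)
    {x : FractionRing (Sring n)} (hx : x ∈ Rfil X j) :
    toFF r * x ∈ Rfil X j := by
  induction hx using Submodule.span_induction with
  | mem x hx =>
    obtain ⟨p, e, W, h1, h2, h3, h4⟩ := hx
    exact Submodule.subset_span ⟨r * p, e, W, h1, h2, h3, by
      rw [h4]; unfold toFF; rw [map_mul, mul_div_assoc]⟩
  | zero => simp
  | add x y _ _ hx hy => rw [mul_add]; exact (Rfil X j).add_mem hx hy
  | smul c x _ hx => rw [mul_smul_comm]; exact (Rfil X j).smul_mem c hx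

open Classical in
theorem stmt3 {n m : ℕ} (X : Fin m → Fin n → ℝ)
    (hX0 : ∀ i, X i ≠ 0)
    (hspan : Submodule.span ℝ (Set.range X) = ⊤)
    (s : Submodule ℝ (Fin n → ℝ)) (hs : RationalSub X s)
    (k : ℕ) (hk : 1 ≤ k) (hdim : Module.finrank ℝ s = k) :
    ∀ q ∈ Jsub X s,
      toFF q / toFF (∏ i ∈ Finset.univ.filter (fun i => X i ∈ s), linP (X i))
        ∈ Rfil X (k - 1) := by
  intro q hq
  induction hq using Submodule.span_induction with
  | mem q hq =>
    obtain ⟨H, hH, hHs, hHrk, hqeq⟩ := hq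
    set e : Fin m → ℕ := fun i => if X i ∈ H then 1 else 0 with he
    have hprod : (∏ i, linP (X i) ^ e i)
        = ∏ i ∈ Finset.univ.filter (fun i => X i ∈ H), linP (X i) := by
      rw [Finset.prod_filter]
      refine Finset.prod_congr rfl fun i _ => ?_
      simp only [he]; split_ifs <;> simp
    have hsplit : (∏ i ∈ Finset.univ.filter (fun i => X i ∈ s), linP (X i))
        = q * ∏ i, linP (X i) ^ e i := by
      rw [hqeq, hprod]
      have h1 : (Finset.univ.filter (fun i => X i ∈ s ∧ X i ∉ H))
          = (Finset.univ.filter (fun i => X i ∈ s)).filter (fun i => X i ∉ H) := by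
        rw [Finset.filter_filter]
      have h2 : (Finset.univ.filter (fun i => X i ∈ H))
          = (Finset.univ.filter (fun i => X i ∈ s)).filter (fun i => X i ∈ H) := by
        rw [Finset.filter_filter]
        refine Finset.filter_congr fun i _ => ?_
        constructor
        · intro h; exact ⟨hHs h, h⟩
        · intro h; exact h.2
      rw [h1, h2, mul_comm]
      exact Finset.prod_filter_mul_prod_filter_not
        (Finset.univ.filter (fun i => X i ∈ s)) (fun i => X i ∈ H)
        (fun i => linP (X i)) |>.symm
    have hqne : toFF q ≠ 0 := by
      have : q ≠ 0 := by
        rw [hqeq]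
        exact Finset.prod_ne_zero_iff.mpr fun i _ => linP_ne_zero (hX0 i)
      simpa [toFF] using
        fun h => this (IsFractionRing.injective (Sring n)
          (FractionRing (Sring n)) (by simpa [toFF, map_zero] using h))
    have key : toFF q / toFF (∏ i ∈ Finset.univ.filter (fun i => X i ∈ s), linP (X i))
        = toFF 1 / toFF (∏ i, linP (X i) ^ e i) := by
      rw [hsplit]
      unfold toFF at hqne ⊢
      rw [map_one, map_mul, div_mul_cancel_left₀ hqne, one_div]
    rw [key]
    refine Submodule.subset_span ⟨1, e, H, hH, ?_, ?_, rfl⟩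
    · omega
    · intro i hi
      simp only [he] at hi
      by_contra hc
      simp [hc] at hi
  | zero => simp [toFF, Rfil]
  | add x y _ _ hx hy =>
    have : toFF (x + y) = toFF x + toFF y := by unfold toFF; rw [map_add]
    rw [this, add_div]
    exact (Rfil X (k - 1)).add_mem hx hy
  | smul r x _ hx =>
    have : toFF (r • x) = toFF r * toFF x := by
      unfold toFF; rw [smul_eq_mul, map_mul]
    rw [this, mul_div_assoc]
    exact Rfil_mul X (k - 1) r hx
end
end

section
/- Let X be a list of nonzero vectors all lying in an open half-space of g* (i.e. there exists x ∈ g with ⟨x,a⟩ > 0 for all a ∈ X). The multivariate spline T_X, the tempered distribution on g* defined by ⟨T_X, f⟩ = ∫_{[0,∞)^m} f(Σ t_i a_i) dt, satisfies T_X = T_a * T_{X∖a} and ∂_a T_X = T_{X∖a} for every a ∈ X; consequently ∂_X T_X = δ_0. -/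
/-!
STATEMENT 11: For a list X of nonzero vectors lying in an open half-space of
g*, the multivariate spline T_X satisfies T_X = T_a * T_{X∖a} and
∂_a T_X = T_{X∖a} for every a ∈ X; consequently ∂_X T_X = δ_0.
(Equalities of tempered distributions, i.e. tested against Schwartz functions.)
-/

noncomputable section

open scoped BigOperators
open MeasureTheory

abbrev Vg (n : ℕ) := EuclideanSpace ℝ (Fin n)

/-- Generalized functions: functionals on test functions. -/
abbrev GDist (n : ℕ) := (Vg n → ℝ) → ℝ

/-- Distributional directional derivative along `a`. -/
def dirD {n : ℕ} (a : Vg n) (T : GDist n) : GDist n :=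
  fun f => - T (fun x => fderiv ℝ f x a)

/-- Iterated distributional derivative ∂_Y along the sublist of X indexed by S. -/
def iterD {n m : ℕ} (X : Fin m → Vg n) (S : Finset (Fin m)) (T : GDist n) : GDist n :=
  S.toList.foldr (fun i T => dirD (X i) T) T

/-- The Dirac delta at the origin. -/
def delta0 {n : ℕ} : GDist n := fun f => f 0

/-- Convolution of generalized functions. -/
def conv {n : ℕ} (S T : GDist n) : GDist n :=
  fun f => S fun x => T fun y => f (x + y)

/-- The multivariate spline T_Y of the sublist Y of X indexed by S:
⟨T_Y, f⟩ = ∫_{[0,∞)^S} f(∑ tᵢ aᵢ) dt. -/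
def TS {n m : ℕ} (X : Fin m → Vg n) (S : Finset (Fin m)) : GDist n :=
  fun f => ∫ t : (↥S → ℝ) in {t | ∀ i, 0 ≤ t i}, f (∑ i, t i • X i)

/-- Equality as tempered distributions: equal pairings with Schwartz functions. -/
def DEq {n : ℕ} (S T : GDist n) : Prop :=
  ∀ f : SchwartzMap (Vg n) ℝ, S ⇑f = T ⇑f

/-!
Pairing `T_Y` with a Schwartz function `f` integrates `f ∘ (t ↦ ∑ tᵢ aᵢ)` over the orthant
`[0, ∞)^Y`. If `x` defines the half-space and `c = minᵢ ⟪x, aᵢ⟫ > 0`, then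
`‖x‖ ‖∑ tᵢ aᵢ‖ ≥ ⟪x, ∑ tᵢ aᵢ⟫ ≥ c ∑ tᵢ ≥ c ‖t‖` there, so this map grows linearly on the orthant
and the integral converges absolutely. Splitting the orthant coordinates and applying Fubini gives
`T_{B ∪ A} = T_B * T_A`. With `B = {a}`, pairing `∂_a T_Y` with `f` integrates `-∂_a f` along the
half-lines `w + [0, ∞) a`, and the fundamental theorem of calculus turns each of these integrals
into `f w`; hence `∂_a T_Y = T_{Y ∖ a}`, and peeling off the vectors one at a time ends at
`T_∅ = δ₀`.
-/

open MeasureTheory Filter Set Module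
open scoped SchwartzMap RealInnerProductSpace LineDeriv Topology

theorem exists_pos_forall_le {ι : Type*} [Finite ι] {a : ι → ℝ} (ha : ∀ i, 0 < a i) :
    ∃ c > 0, ∀ i, c ≤ a i := by
  have h : ∀ᶠ c in 𝓝[>] (0:ℝ), ∀ i, c ≤ a i :=
    eventually_all.2 fun i => nhdsWithin_le_nhds (eventually_le_nhds (ha i))
  obtain ⟨c, hca, hc⟩ := (h.and self_mem_nhdsWithin).exists
  exact ⟨c, hc, hca⟩

theorem SchwartzMap.integrableOn_comp_of_norm_le {E F V : Type*} [NormedAddCommGroup E]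
    [NormedSpace ℝ E] [FiniteDimensional ℝ E] [MeasurableSpace E] [BorelSpace E] {μ : Measure E}
    [μ.IsAddHaarMeasure] [NormedAddCommGroup F] [NormedSpace ℝ F] [NormedAddCommGroup V]
    [NormedSpace ℝ V] (f : 𝓢(F, V)) {g : E → F} (hg : Continuous g) {s : Set E}
    (hs : MeasurableSet s) {C : ℝ} (hgs : ∀ t ∈ s, ‖t‖ ≤ C * (1 + ‖g t‖)) :
    IntegrableOn (fun t => f (g t)) s μ := by
  set k := finrank ℝ E + 1
  set D := 2 ^ k * (Finset.Iic (k, 0)).sup (fun m => SchwartzMap.seminorm ℝ m.1 m.2) f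
  have hdecay : ∀ v, (1 + ‖v‖) ^ k * ‖f v‖ ≤ D := fun v => by
    simpa using one_add_le_sup_seminorm_apply (𝕜 := ℝ) (m := (k, 0)) le_rfl le_rfl f v
  have hint : Integrable (fun t : E => ((1 + C) ^ k * D) * (1 + ‖t‖) ^ (-(k : ℝ))) μ :=
    (integrable_one_add_norm (by simp [k])).const_mul _
  refine hint.integrableOn.mono' (f.continuous.comp hg).aestronglyMeasurable.restrict
    (ae_restrict_of_forall_mem hs fun t ht => ?_)
  have hgt := hgs t ht
  have hC : 0 ≤ C := nonneg_of_mul_nonneg_left ((norm_nonneg t).trans hgt) (by positivity)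
  have hcomp : 1 + ‖t‖ ≤ (1 + C) * (1 + ‖g t‖) := by nlinarith [norm_nonneg (g t)]
  rw [Real.rpow_neg (by positivity), Real.rpow_natCast, ← div_eq_mul_inv,
    le_div_iff₀ (by positivity)]
  calc ‖f (g t)‖ * (1 + ‖t‖) ^ k ≤ ‖f (g t)‖ * ((1 + C) * (1 + ‖g t‖)) ^ k := by gcongr
    _ = (1 + C) ^ k * ((1 + ‖g t‖) ^ k * ‖f (g t)‖) := by rw [mul_pow]; ring
    _ ≤ (1 + C) ^ k * D := by gcongr; exact hdecay _

theorem pi_norm_le_sum_of_nonneg {ι : Type*} [Fintype ι] {t : ι → ℝ} (ht : 0 ≤ t) :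
    ‖t‖ ≤ ∑ i, t i :=
  (pi_norm_le_iff_of_nonneg (Finset.sum_nonneg fun i _ => ht i)).2 fun i => by
    rw [Real.norm_of_nonneg (ht i)]
    exact Finset.single_le_sum (fun j _ => ht j) (Finset.mem_univ i)

theorem SchwartzMap.integrableOn_Ici_comp_sum_smul {ι F V : Type*} [Fintype ι]
    [NormedAddCommGroup F] [InnerProductSpace ℝ F] [NormedAddCommGroup V] [NormedSpace ℝ V]
    (f : 𝓢(F, V)) {a : ι → F} {x : F} (hx : ∀ i, 0 < ⟪x, a i⟫) :
    IntegrableOn (fun t : ι → ℝ => f (∑ i, t i • a i)) (Ici 0) := by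
  obtain ⟨c, hc, hca⟩ := exists_pos_forall_le hx
  refine f.integrableOn_comp_of_norm_le (C := c⁻¹ * ‖x‖) (by fun_prop) measurableSet_Ici
    fun t ht => ?_
  set v := ∑ i, t i • a i
  have hinner : c * ∑ i, t i ≤ ⟪x, v⟫ := by
    rw [inner_sum, Finset.mul_sum]
    gcongr with i
    rw [real_inner_smul_right, mul_comm]
    exact mul_le_mul_of_nonneg_left (hca i) (ht i)
  calc ‖t‖ ≤ c⁻¹ * (c * ∑ i, t i) := by
        rw [inv_mul_cancel_left₀ hc.ne']
        exact pi_norm_le_sum_of_nonneg ht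
    _ ≤ c⁻¹ * (‖x‖ * ‖v‖) :=
        mul_le_mul_of_nonneg_left (hinner.trans (real_inner_le_norm x v)) (by positivity)
    _ ≤ c⁻¹ * ‖x‖ * (1 + ‖v‖) := by rw [← mul_assoc]; gcongr; linarith

theorem SchwartzMap.integral_Ici_deriv {V : Type*} [NormedAddCommGroup V] [NormedSpace ℝ V]
    [CompleteSpace V] (g : 𝓢(ℝ, V)) : ∫ r in Ici (0:ℝ), deriv g r = - g 0 := by
  rw [integral_Ici_eq_integral_Ioi,
    integral_Ioi_of_hasDerivAt_of_tendsto g.continuous.continuousWithinAt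
      (fun r _ => g.differentiableAt.hasDerivAt) (derivCLM ℝ V g).integrable.integrableOn
      (g.tendsto_cocompact.mono_left atTop_le_cocompact), zero_sub]

theorem SchwartzMap.integral_Ici_lineDerivOp_add_smul {F V : Type*} [NormedAddCommGroup F]
    [NormedSpace ℝ F] [NormedAddCommGroup V] [NormedSpace ℝ V] [CompleteSpace V]
    (f : 𝓢(F, V)) {a : F} (ha : a ≠ 0) (w : F) :
    ∫ r in Ici (0:ℝ), ∂_{a} f (w + r • a) = - f w := by
  have hline : Function.HasTemperateGrowth (fun r : ℝ => w + r • a) :=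
    (Function.HasTemperateGrowth.const w).add
      (Function.HasTemperateGrowth.id'.smul (Function.HasTemperateGrowth.const a))
  have hanti : AntilipschitzWith ‖a‖₊⁻¹ (fun r : ℝ => w + r • a) :=
    AntilipschitzWith.of_le_mul_dist fun r s => by
      rw [dist_add_left, dist_eq_norm, dist_eq_norm, ← sub_smul, norm_smul, NNReal.coe_inv,
        coe_nnnorm, mul_comm ‖r - s‖, inv_mul_cancel_left₀ (norm_ne_zero_iff.2 ha)]
  set g : 𝓢(ℝ, V) := compCLMOfAntilipschitz ℝ hline hanti f
  have hg : ∀ r, g r = f (w + r • a) := fun r => rfl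
  have hderiv : ∀ r, deriv g r = ∂_{a} f (w + r • a) := fun r => by
    have : HasDerivAt (fun r : ℝ => w + r • a) a r := by
      simpa using ((hasDerivAt_id r).smul_const a).const_add w
    exact (f.differentiableAt.hasFDerivAt.comp_hasDerivAt r this).deriv
  simp_rw [← hderiv, g.integral_Ici_deriv, hg, zero_smul, add_zero]

theorem Equiv.sum_piFinsetUnion {ι M : Type*} {α : ι → Type*} [DecidableEq ι] [AddCommMonoid M]
    {B A : Finset ι} (hd : Disjoint B A) (φ : ∀ i, α i → M) (p : ∀ i : B, α i)
    (q : ∀ i : A, α i) :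
    ∑ j : ↥(B ∪ A), φ j (Equiv.piFinsetUnion α hd (p, q) j) =
      ∑ i : ↥B, φ i (p i) + ∑ i : ↥A, φ i (q i) := by
  rw [← (Equiv.Finset.union B A hd).sum_comp, Fintype.sum_sum_type]
  congr 1
  · exact Finset.sum_congr rfl fun i _ => by
      rw [Equiv.Finset.union_inl, Equiv.piFinsetUnion_left α hd i.2]
  · exact Finset.sum_congr rfl fun i _ => by
      rw [Equiv.Finset.union_inr, Equiv.piFinsetUnion_right α hd i.2]

theorem setIntegral_Ici_piFinsetUnion {ι E : Type*} [DecidableEq ι] [NormedAddCommGroup E]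
    [NormedSpace ℝ E] {B A : Finset ι} (hd : Disjoint B A) {g : (↥(B ∪ A) → ℝ) → E}
    (hg : IntegrableOn g (Ici 0)) :
    ∫ t in Ici 0, g t =
      ∫ p in Ici 0, ∫ q in Ici 0, g (Equiv.piFinsetUnion (fun _ => ℝ) hd (p, q)) := by
  set e := MeasurableEquiv.piFinsetUnion (fun _ : ι => ℝ) hd
  have hcoe : ⇑e = Equiv.piFinsetUnion (fun _ : ι => ℝ) hd := rfl
  have he : MeasurePreserving e (volume.prod volume) volume := by
    rw [← Measure.volume_eq_prod]
    exact volume_preserving_piFinsetUnion _ hd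
  have hpre : e ⁻¹' Ici 0 = Ici 0 ×ˢ Ici 0 := by
    ext ⟨p, q⟩
    simp only [hcoe, mem_preimage, mem_prod, mem_Ici, Pi.le_def, Pi.zero_apply]
    constructor
    · intro h
      refine ⟨fun i => ?_, fun i => ?_⟩
      · simpa only [Equiv.piFinsetUnion_left _ hd i.2] using h ⟨i, Finset.mem_union_left A i.2⟩
      · simpa only [Equiv.piFinsetUnion_right _ hd i.2] using h ⟨i, Finset.mem_union_right B i.2⟩
    · rintro ⟨hp, hq⟩ ⟨j, hj⟩
      rcases Finset.mem_union.1 hj with h | h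
      · simpa only [Equiv.piFinsetUnion_left _ hd h] using hp ⟨j, h⟩
      · simpa only [Equiv.piFinsetUnion_right _ hd h] using hq ⟨j, h⟩
  have hint : IntegrableOn (fun z => g (e z)) (Ici 0 ×ˢ Ici 0) (volume.prod volume) :=
    hpre ▸ (he.integrableOn_comp_preimage e.measurableEmbedding).2 hg
  rw [← he.setIntegral_preimage_emb e.measurableEmbedding, hpre, setIntegral_prod _ hint, hcoe]

section Spline

variable {n m : ℕ} {X : Fin m → Vg n}

theorem DEq.trans {S T U : GDist n} (h₁ : DEq S T) (h₂ : DEq T U) : DEq S U :=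
  fun f => (h₁ f).trans (h₂ f)

theorem dirD_congr (a : Vg n) {T T' : GDist n} (h : DEq T T') : DEq (dirD a T) (dirD a T') :=
  fun f => congrArg Neg.neg (h (∂_{a} f))

theorem TS_apply (S : Finset (Fin m)) (F : Vg n → ℝ) :
    TS X S F = ∫ t : ↥S → ℝ in Ici 0, F (∑ i, t i • X i) :=
  rfl

theorem TS_empty (f : Vg n → ℝ) : TS X ∅ f = f 0 := by
  simp [TS, measureReal_def, volume_pi, Measure.pi_empty_univ]

theorem TS_singleton (i : Fin m) (F : Vg n → ℝ) :
    TS X {i} F = ∫ r in Ici (0:ℝ), F (r • X i) := by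
  have he := volume_preserving_funUnique ↥({i} : Finset (Fin m)) ℝ
  have hpre : MeasurableEquiv.funUnique ↥({i} : Finset (Fin m)) ℝ ⁻¹' Ici 0 = Ici 0 := by
    ext t
    simp [Pi.le_def, Unique.forall_iff]
  rw [TS_apply, ← hpre, ← he.setIntegral_preimage_emb (MeasurableEquiv.measurableEmbedding _)]
  simp only [Fintype.sum_unique]
  rfl

theorem TS_union {x : Vg n} (hx : ∀ i, 0 < ⟪x, X i⟫) {B A : Finset (Fin m)}
    (hd : Disjoint B A) (f : 𝓢(Vg n, ℝ)) :
    TS X (B ∪ A) f = conv (TS X B) (TS X A) f := by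
  have hf := f.integrableOn_Ici_comp_sum_smul (a := fun i : ↥(B ∪ A) => X i) fun i => hx i
  rw [TS_apply, setIntegral_Ici_piFinsetUnion hd hf]
  simp only [conv, TS_apply, Equiv.sum_piFinsetUnion hd (fun i r => r • X i)]

theorem dirD_TS {x : Vg n} (hx : ∀ i, 0 < ⟪x, X i⟫) {i : Fin m} (hXi : X i ≠ 0)
    {S : Finset (Fin m)} (hi : i ∈ S) :
    DEq (dirD (X i) (TS X S)) (TS X (S.erase i)) := by
  intro f
  have hS : S.erase i ∪ {i} = S := by
    rw [Finset.union_comm, ← Finset.insert_eq, Finset.insert_erase hi]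
  have hd : Disjoint (S.erase i) {i} :=
    Finset.disjoint_singleton_right.2 (Finset.notMem_erase i S)
  calc dirD (X i) (TS X S) f = - TS X S ⇑(∂_{X i} f : 𝓢(Vg n, ℝ)) := rfl
    _ = - conv (TS X (S.erase i)) (TS X {i}) ⇑(∂_{X i} f : 𝓢(Vg n, ℝ)) := by
      rw [← TS_union hx hd, hS]
    _ = - TS X (S.erase i) (fun y => - f y) := by
      simp only [conv, TS_singleton, f.integral_Ici_lineDerivOp_add_smul hXi]
    _ = TS X (S.erase i) f := by rw [TS_apply, TS_apply, integral_neg, neg_neg]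

theorem foldr_dirD_TS {x : Vg n} (hx : ∀ i, 0 < ⟪x, X i⟫) (hX0 : ∀ i, X i ≠ 0)
    {U : Finset (Fin m)} {l : List (Fin m)} (hl : l.Nodup) (hlU : ∀ i ∈ l, i ∈ U) :
    DEq (l.foldr (fun i T => dirD (X i) T) (TS X U)) (TS X (U \ l.toFinset)) := by
  induction l with
  | nil =>
    rw [List.foldr_nil, List.toFinset_nil, Finset.sdiff_empty]
    exact fun _ => rfl
  | cons i l ih =>
    obtain ⟨hil, hl⟩ := List.nodup_cons.1 hl
    have hi : i ∈ U \ l.toFinset :=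
      Finset.mem_sdiff.2 ⟨hlU i List.mem_cons_self, fun h => hil (List.mem_toFinset.1 h)⟩
    rw [List.foldr_cons, List.toFinset_cons, Finset.sdiff_insert]
    exact (dirD_congr (X i) (ih hl fun j hj => hlU j (List.mem_cons_of_mem i hj))).trans
      (dirD_TS hx (hX0 i) hi)

theorem iterD_TS {x : Vg n} (hx : ∀ i, 0 < ⟪x, X i⟫) (hX0 : ∀ i, X i ≠ 0)
    {S U : Finset (Fin m)} (hSU : S ⊆ U) :
    DEq (iterD X S (TS X U)) (TS X (U \ S)) := by
  simpa [iterD] using foldr_dirD_TS hx hX0 S.nodup_toList fun i hi => hSU (S.mem_toList.1 hi)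

end Spline

theorem stmt11 {n m : ℕ} (X : Fin m → Vg n)
    (hX0 : ∀ i, X i ≠ 0)
    (hhalf : ∃ x : Vg n, ∀ i, 0 < inner (𝕜 := ℝ) x (X i)) :
    (∀ i₀ : Fin m,
      DEq (TS X Finset.univ) (conv (TS X {i₀}) (TS X (Finset.univ.erase i₀)))) ∧
    (∀ i₀ : Fin m,
      DEq (dirD (X i₀) (TS X Finset.univ)) (TS X (Finset.univ.erase i₀))) ∧
    DEq (iterD X Finset.univ (TS X Finset.univ)) delta0 := by
  obtain ⟨x, hx⟩ := hhalf
  refine ⟨fun i f => ?_, fun i => dirD_TS hx (hX0 i) (Finset.mem_univ i), ?_⟩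
  · rw [← TS_union hx (Finset.disjoint_singleton_left.2 (Finset.notMem_erase i _)),
      ← Finset.insert_eq, Finset.insert_erase (Finset.mem_univ i)]
  · have h := iterD_TS hx hX0 (subset_refl (Finset.univ : Finset (Fin m)))
    rw [Finset.sdiff_self] at h
    exact h.trans fun f => TS_empty f
end
end
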